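/- arXiv:math/0603306 — 5 statements merged into one kernel-verified Lean document; each statement's English description precedes it below -/
import Mathlib

section
/- Let X ~ Exp(1-ρ), Y ~ Exp(ρ), W ~ Exp(1) be independent, 0 < ρ < 1. Then for s < 1-ρ, t < ρ, u < 1, the joint moment generating function satisfies E[exp(s((X-Y)^+ + W) + t((Y-X)^+ + W) + u·min(X,Y))] = ρ(1-ρ)/((1-ρ-s)(ρ-t)(1-u)). -/
open MeasureTheory ProbabilityTheory

/-!
Write `a, b` for the rates of `X, Y`. Under the product law, split the plane along the diagonal.
On `{Y < X}` the integrand is `exp (s (X - Y) + u Y)`; integrating `X` over `(Y, ∞)` first gives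
`a / (a - s) · exp ((u - a) Y)`, and then `Y` gives `b / (a + b - u)`. The region `{X ≤ Y}` is
the mirror image, the diagonal being null. `W` enters only through the independent factor
`exp ((s + t) W)`, whose mean is `(a + b) / (a + b - s - t)`; for `a + b = 1` the three factors
combine to the stated product.
-/

open Real Set

theorem MeasureTheory.Measure.ae_fst_ne_snd_prod {α : Type*} [MeasurableSpace α]
    [MeasurableEq α] (μ ν : Measure α) [SFinite ν] [NullSingletonClass ν] :
    ∀ᵐ q ∂μ.prod ν, q.1 ≠ q.2 :=
  (Measure.ae_prod_iff_ae_ae (measurableSet_eq_fun measurable_fst measurable_snd).compl).2 <|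
    Filter.Eventually.of_forall fun x => (Measure.ae_ne ν x).mono fun _ hy => hy.symm

namespace ProbabilityTheory

lemma expMeasure_eq_withDensity (r : ℝ) : expMeasure r = volume.withDensity (exponentialPDF r) :=
  rfl

lemma measurable_exponentialPDF (r : ℝ) : Measurable (exponentialPDF r) :=
  (measurable_exponentialPDFReal r).ennreal_ofReal

instance (r : ℝ) : NullSingletonClass (expMeasure r) :=
  ⟨fun x => withDensity_absolutelyContinuous _ _ (measure_singleton x)⟩

instance (r : ℝ) : SFinite (expMeasure r) := by
  rw [expMeasure_eq_withDensity]; infer_instance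

lemma restrict_Ioi_zero_expMeasure (r : ℝ) : (expMeasure r).restrict (Ioi 0) = expMeasure r := by
  refine Measure.restrict_eq_self_of_ae_mem ?_
  rw [expMeasure_eq_withDensity, ae_withDensity_iff (measurable_exponentialPDF r)]
  filter_upwards [Measure.ae_ne volume 0] with x hx hpdf
  exact lt_of_le_of_ne (not_lt.1 fun h => hpdf (exponentialPDF_of_neg h)) hx.symm

lemma setLIntegral_expMeasure_Ioi_exp {r c y : ℝ} (hr : 0 ≤ r) (hc : c < r) (hy : 0 ≤ y) :
    ∫⁻ x in Ioi y, ENNReal.ofReal (exp (c * x)) ∂expMeasure r =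
      ENNReal.ofReal (r / (r - c) * exp ((c - r) * y)) := by
  have hcr : c - r < 0 := by linarith
  rw [expMeasure_eq_withDensity, setLIntegral_withDensity_eq_setLIntegral_mul _
    (measurable_exponentialPDF r) (by fun_prop) measurableSet_Ioi]
  calc ∫⁻ x in Ioi y, (exponentialPDF r * fun x => ENNReal.ofReal (exp (c * x))) x
      = ∫⁻ x in Ioi y, ENNReal.ofReal (r * exp ((c - r) * x)) := by
        refine setLIntegral_congr_fun measurableSet_Ioi fun x (hx : y < x) => ?_
        rw [Pi.mul_apply, exponentialPDF_of_nonneg (hy.trans hx.le),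
          ← ENNReal.ofReal_mul (by positivity), mul_assoc, ← exp_add]
        ring_nf
    _ = ENNReal.ofReal (r / (r - c) * exp ((c - r) * y)) := by
        rw [← ofReal_integral_eq_lintegral_ofReal ((integrableOn_exp_mul_Ioi hcr y).const_mul r)
          (Filter.Eventually.of_forall fun x => by positivity), integral_const_mul,
          integral_exp_mul_Ioi hcr, neg_div, ← div_neg, neg_sub]
        ring_nf

lemma lintegral_expMeasure_exp {r c : ℝ} (hr : 0 ≤ r) (hc : c < r) :
    ∫⁻ x, ENNReal.ofReal (exp (c * x)) ∂expMeasure r = ENNReal.ofReal (r / (r - c)) := by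
  rw [← restrict_Ioi_zero_expMeasure, setLIntegral_expMeasure_Ioi_exp hr hc le_rfl, mul_zero,
    exp_zero, mul_one]

lemma lintegral_indicator_snd_lt_fst_expMeasure {a s u y : ℝ} (ha : 0 ≤ a) (hs : s < a)
    (hy : 0 ≤ y) :
    ∫⁻ x, {p : ℝ × ℝ | p.2 < p.1}.indicator
        (fun p => ENNReal.ofReal (exp (s * (p.1 - p.2) + u * p.2))) (x, y) ∂expMeasure a =
      ENNReal.ofReal (a / (a - s)) * ENNReal.ofReal (exp ((u - a) * y)) := by
  calc _ = ∫⁻ x in Ioi y, ENNReal.ofReal (exp (s * x)) * ENNReal.ofReal (exp ((u - s) * y))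
          ∂expMeasure a := by
        rw [← lintegral_indicator measurableSet_Ioi]
        refine lintegral_congr fun x => ?_
        simp only [indicator_apply, mem_ofPred_eq, mem_Ioi]
        split_ifs
        · rw [← ENNReal.ofReal_mul (exp_pos _).le, ← exp_add]
          ring_nf
        · rfl
    _ = _ := by
        rw [lintegral_mul_const' _ _ ENNReal.ofReal_ne_top,
          setLIntegral_expMeasure_Ioi_exp ha hs hy,
          ← ENNReal.ofReal_mul (by have := sub_pos.2 hs; positivity), mul_assoc, ← exp_add,
          ← ENNReal.ofReal_mul (by have := sub_pos.2 hs; positivity)]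
        ring_nf

lemma setLIntegral_prod_expMeasure_lt {a b s u : ℝ} (ha : 0 ≤ a) (hb : 0 ≤ b) (hs : s < a)
    (hu : u < a + b) :
    ∫⁻ p in {p : ℝ × ℝ | p.2 < p.1}, ENNReal.ofReal (exp (s * (p.1 - p.2) + u * p.2))
        ∂(expMeasure a).prod (expMeasure b) =
      ENNReal.ofReal (a / (a - s) * (b / (a + b - u))) := by
  have hA : MeasurableSet {p : ℝ × ℝ | p.2 < p.1} :=
    measurableSet_lt measurable_snd measurable_fst
  rw [← lintegral_indicator hA,
    lintegral_prod_symm _ ((Measurable.indicator (by fun_prop) hA).aemeasurable),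
    ← restrict_Ioi_zero_expMeasure b, setLIntegral_congr_fun measurableSet_Ioi
      fun y (hy : 0 < y) => lintegral_indicator_snd_lt_fst_expMeasure ha hs hy.le,
    lintegral_const_mul' _ _ ENNReal.ofReal_ne_top, restrict_Ioi_zero_expMeasure,
    lintegral_expMeasure_exp hb (by linarith),
    ← ENNReal.ofReal_mul (by have := sub_pos.2 hs; positivity)]
  ring_nf

lemma setLIntegral_prod_expMeasure_not_lt {a b t u : ℝ} (ha : 0 ≤ a) (hb : 0 ≤ b) (ht : t < b)
    (hu : u < a + b) :
    ∫⁻ p in {p : ℝ × ℝ | p.2 < p.1}ᶜ, ENNReal.ofReal (exp (t * (p.2 - p.1) + u * p.1))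
        ∂(expMeasure a).prod (expMeasure b) =
      ENNReal.ofReal (b / (b - t) * (a / (a + b - u))) := by
  have hlt_ae_le : {q : ℝ × ℝ | q.2 < q.1} =ᵐ[(expMeasure b).prod (expMeasure a)]
      {q | q.2 ≤ q.1} := by
    filter_upwards [Measure.ae_fst_ne_snd_prod (expMeasure b) (expMeasure a)] with q hq
    exact propext ⟨le_of_lt, fun h => h.lt_of_ne hq.symm⟩
  rw [← lintegral_indicator (measurableSet_lt measurable_snd measurable_fst).compl,
    ← lintegral_prod_swap, add_comm a b,
    ← setLIntegral_prod_expMeasure_lt hb ha ht (by linarith),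
    setLIntegral_congr hlt_ae_le,
    ← lintegral_indicator (measurableSet_le measurable_snd measurable_fst)]
  refine lintegral_congr fun q => ?_
  simp only [indicator_apply, mem_compl_iff, mem_ofPred_eq, Prod.fst_swap, Prod.snd_swap, not_lt]

lemma lintegral_prod_expMeasure_exp_max_min {a b s t u : ℝ} (ha : 0 ≤ a) (hb : 0 ≤ b)
    (hs : s < a) (ht : t < b) (hu : u < a + b) :
    ∫⁻ p : ℝ × ℝ, ENNReal.ofReal (exp (s * max (p.1 - p.2) 0 + t * max (p.2 - p.1) 0 +
        u * min p.1 p.2)) ∂(expMeasure a).prod (expMeasure b) =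
      ENNReal.ofReal (a / (a - s) * (b / (a + b - u)) + b / (b - t) * (a / (a + b - u))) := by
  have hA : MeasurableSet {p : ℝ × ℝ | p.2 < p.1} :=
    measurableSet_lt measurable_snd measurable_fst
  rw [← lintegral_add_compl _ hA,
    setLIntegral_congr_fun hA fun p (hp : p.2 < p.1) => by
      rw [max_eq_left (sub_nonneg.2 hp.le), max_eq_right (sub_nonpos.2 hp.le), min_eq_right hp.le,
        mul_zero, add_zero],
    setLIntegral_congr_fun hA.compl fun p (hp : ¬p.2 < p.1) => by
      rw [max_eq_right (sub_nonpos.2 (not_lt.1 hp)), max_eq_left (sub_nonneg.2 (not_lt.1 hp)),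
        min_eq_left (not_lt.1 hp), mul_zero, zero_add],
    setLIntegral_prod_expMeasure_lt ha hb hs hu, setLIntegral_prod_expMeasure_not_lt ha hb ht hu,
    ← ENNReal.ofReal_add (by have := sub_pos.2 hs; have := sub_pos.2 hu; positivity)
      (by have := sub_pos.2 ht; have := sub_pos.2 hu; positivity)]

lemma integral_prod_prod_expMeasure_exp {a b s t u : ℝ} (ha : 0 ≤ a) (hb : 0 ≤ b)
    (hs : s < a) (ht : t < b) (hu : u < a + b) :
    ∫ z : (ℝ × ℝ) × ℝ, exp (s * (max (z.1.1 - z.1.2) 0 + z.2) +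
        t * (max (z.1.2 - z.1.1) 0 + z.2) + u * min z.1.1 z.1.2)
        ∂((expMeasure a).prod (expMeasure b)).prod (expMeasure (a + b)) =
      a * b * (a + b) / ((a - s) * (b - t) * (a + b - u)) := by
  have hs' := sub_pos.2 hs
  have ht' := sub_pos.2 ht
  have hu' := sub_pos.2 hu
  have hst : 0 < a + b - (s + t) := by linarith
  have hlint : ∫⁻ z : (ℝ × ℝ) × ℝ,
        ENNReal.ofReal (exp (s * (max (z.1.1 - z.1.2) 0 + z.2) +
          t * (max (z.1.2 - z.1.1) 0 + z.2) + u * min z.1.1 z.1.2))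
        ∂((expMeasure a).prod (expMeasure b)).prod (expMeasure (a + b)) =
      ENNReal.ofReal (a / (a - s) * (b / (a + b - u)) + b / (b - t) * (a / (a + b - u))) *
        ENNReal.ofReal ((a + b) / (a + b - (s + t))) := by
    rw [← lintegral_prod_expMeasure_exp_max_min ha hb hs ht hu,
      ← lintegral_expMeasure_exp (by positivity) (sub_pos.1 hst),
      ← lintegral_prod_mul (by fun_prop) (by fun_prop)]
    refine lintegral_congr fun z => ?_
    rw [← ENNReal.ofReal_mul (exp_pos _).le, ← exp_add]
    ring_nf
  rw [integral_eq_lintegral_of_nonneg_ae (Filter.Eventually.of_forall fun _ => (exp_pos _).le)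
      (by fun_prop), hlint, ← ENNReal.ofReal_mul (by positivity),
    ENNReal.toReal_ofReal (by positivity)]
  field_simp
  ring

lemma aemeasurable_of_map_eq_expMeasure {Ω : Type*} [MeasurableSpace Ω] {μ : Measure Ω}
    {X : Ω → ℝ} {r : ℝ} (hr : 0 < r) (hX : μ.map X = expMeasure r) : AEMeasurable X μ := by
  have := isProbabilityMeasure_expMeasure hr
  exact aemeasurable_of_map_neZero (hX ▸ inferInstance)

lemma iIndepFun.map_prodMk_prodMk_eq_prod {Ω β : Type*} [MeasurableSpace Ω] [MeasurableSpace β]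
    {μ : Measure Ω} [IsFiniteMeasure μ] {X Y Z : Ω → β} (h : iIndepFun ![X, Y, Z] μ)
    (hX : AEMeasurable X μ) (hY : AEMeasurable Y μ) (hZ : AEMeasurable Z μ) :
    μ.map (fun ω => ((X ω, Y ω), Z ω)) = ((μ.map X).prod (μ.map Y)).prod (μ.map Z) := by
  have hXY : IndepFun X Y μ := h.indepFun (i := 0) (j := 1) (by decide)
  have hXYZ : IndepFun (fun ω => (X ω, Y ω)) Z μ :=
    h.indepFun_prodMk₀ (fun i => by fin_cases i <;> assumption) 0 1 2 (by decide) (by decide)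
  rw [(indepFun_iff_map_prod_eq_prod_map_map (hX.prodMk hY) hZ).1 hXYZ,
    (indepFun_iff_map_prod_eq_prod_map_map hX hY).1 hXY]

end ProbabilityTheory

theorem stmt_1 {Ω : Type*} [MeasureSpace Ω] {μ : Measure Ω} [IsProbabilityMeasure μ]
    (ρ : ℝ) (hρ0 : 0 < ρ) (hρ1 : ρ < 1)
    (X Y W : Ω → ℝ)
    (hindep : iIndepFun ![X, Y, W] μ)
    (hX : μ.map X = expMeasure (1 - ρ))
    (hY : μ.map Y = expMeasure ρ)
    (hW : μ.map W = expMeasure 1)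
    (s t u : ℝ) (hs : s < 1 - ρ) (ht : t < ρ) (hu : u < 1) :
    ∫ ω, Real.exp (s * (max (X ω - Y ω) 0 + W ω) +
        t * (max (Y ω - X ω) 0 + W ω) + u * min (X ω) (Y ω)) ∂μ =
      ρ * (1 - ρ) / ((1 - ρ - s) * (ρ - t) * (1 - u)) := by
  have h1ρ : 0 < 1 - ρ := sub_pos.2 hρ1
  have hXm := aemeasurable_of_map_eq_expMeasure h1ρ hX
  have hYm := aemeasurable_of_map_eq_expMeasure hρ0 hY
  have hWm := aemeasurable_of_map_eq_expMeasure one_pos hW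
  have hlaw : μ.map (fun ω => ((X ω, Y ω), W ω)) =
      ((expMeasure (1 - ρ)).prod (expMeasure ρ)).prod (expMeasure (1 - ρ + ρ)) := by
    rw [sub_add_cancel, hindep.map_prodMk_prodMk_eq_prod hXm hYm hWm, hX, hY, hW]
  have hmgf := integral_prod_prod_expMeasure_exp h1ρ.le hρ0.le hs ht (u := u) (by linarith)
  rw [← hlaw, integral_map ((hXm.prodMk hYm).prodMk hWm) (by fun_prop)] at hmgf
  rw [hmgf, sub_add_cancel]
  ring
end

section
/- Let {ω_{ij}} and {ω̃_{ij}} be two arrays of nonnegative reals indexed by (i,j) ∈ ℤ₊² with ω_{00} = ω̃_{00} = 0, ω_{0j} ≥ ω̃_{0j} for all j ≥ 1, ω_{i0} ≤ ω̃_{i0} for all i ≥ 1, and ω_{ij} = ω̃_{ij} for all i,j ≥ 1. Define last-passage times G and G̃ by the recurrence G_{ij} = max(G_{(i-1)j}, G_{i(j-1)}) + ω_{ij} (with G taken as 0 for negative indices), and similarly for G̃. Then for all i ≥ 1, j ≥ 0: G_{ij} - G_{(i-1)j} ≤ G̃_{ij} - G̃_{(i-1)j}, and for all i ≥ 0, j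 ≥ 1: G_{ij} - G_{i(j-1)} ≥ G̃_{ij} - G̃_{i(j-1)}. -/
theorem stmt_2 (ω ω' G G' : ℕ → ℕ → ℝ)
    (hω : ∀ i j, 0 ≤ ω i j) (hω' : ∀ i j, 0 ≤ ω' i j)
    (h00 : ω 0 0 = 0) (h00' : ω' 0 0 = 0)
    (hW : ∀ j, 1 ≤ j → ω' 0 j ≤ ω 0 j)
    (hS : ∀ i, 1 ≤ i → ω i 0 ≤ ω' i 0)
    (hint : ∀ i j, 1 ≤ i → 1 ≤ j → ω i j = ω' i j)
    (hG : ∀ i j, G i j =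
      max (if i = 0 then 0 else G (i - 1) j) (if j = 0 then 0 else G i (j - 1))
        + ω i j)
    (hG' : ∀ i j, G' i j =
      max (if i = 0 then 0 else G' (i - 1) j) (if j = 0 then 0 else G' i (j - 1))
        + ω' i j) :
    (∀ i j, G (i + 1) j - G i j ≤ G' (i + 1) j - G' i j) ∧
    (∀ i j, G' i (j + 1) - G' i j ≤ G i (j + 1) - G i j) := by
  -- nonnegativity along the axes
  have hGx : ∀ i, 0 ≤ G i 0 := by
    intro i; induction i with
    | zero => rw [hG]; simp [h00]
    | succ n ih =>
      rw [hG]; simp only [Nat.succ_ne_zero, if_false, if_true, Nat.add_sub_cancel, Nat.reduceEqDiff, reduceIte]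
      have h1 : (0:ℝ) ≤ max (G n 0) 0 := le_max_right _ _
      linarith [hω (n+1) 0]
  have hG'x : ∀ i, 0 ≤ G' i 0 := by
    intro i; induction i with
    | zero => rw [hG']; simp [h00']
    | succ n ih =>
      rw [hG']; simp only [Nat.succ_ne_zero, if_false, if_true, Nat.add_sub_cancel, Nat.reduceEqDiff, reduceIte]
      have h1 : (0:ℝ) ≤ max (G' n 0) 0 := le_max_right _ _
      linarith [hω' (n+1) 0]
  have hGy : ∀ j, 0 ≤ G 0 j := by
    intro j; induction j with
    | zero => rw [hG]; simp [h00]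
    | succ n ih =>
      rw [hG]; simp only [Nat.succ_ne_zero, if_false, if_true, Nat.add_sub_cancel, Nat.reduceEqDiff, reduceIte]
      have h1 : (0:ℝ) ≤ max 0 (G 0 n) := le_max_left _ _
      linarith [hω 0 (n+1)]
  have hG'y : ∀ j, 0 ≤ G' 0 j := by
    intro j; induction j with
    | zero => rw [hG']; simp [h00']
    | succ n ih =>
      rw [hG']; simp only [Nat.succ_ne_zero, if_false, if_true, Nat.add_sub_cancel, Nat.reduceEqDiff, reduceIte]
      have h1 : (0:ℝ) ≤ max 0 (G' 0 n) := le_max_left _ _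
      linarith [hω' 0 (n+1)]
  -- base cases on the axes
  have baseI : ∀ i, G (i+1) 0 - G i 0 ≤ G' (i+1) 0 - G' i 0 := by
    intro i
    have e1 : G (i+1) 0 = G i 0 + ω (i+1) 0 := by
      rw [hG]; simp [Nat.add_sub_cancel, max_eq_left (hGx i)]
    have e2 : G' (i+1) 0 = G' i 0 + ω' (i+1) 0 := by
      rw [hG']; simp [Nat.add_sub_cancel, max_eq_left (hG'x i)]
    rw [e1, e2]
    have := hS (i+1) (by omega)
    linarith
  have baseJ : ∀ j, G' 0 (j+1) - G' 0 j ≤ G 0 (j+1) - G 0 j := by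
    intro j
    have e1 : G 0 (j+1) = G 0 j + ω 0 (j+1) := by
      rw [hG]; simp [Nat.add_sub_cancel, max_eq_right (hGy j)]
    have e2 : G' 0 (j+1) = G' 0 j + ω' 0 (j+1) := by
      rw [hG']; simp [Nat.add_sub_cancel, max_eq_right (hG'y j)]
    rw [e1, e2]
    have := hW (j+1) (by omega)
    linarith
  have key : ∀ n i j, i + j = n →
      (G (i+1) j - G i j ≤ G' (i+1) j - G' i j) ∧
      (G' i (j+1) - G' i j ≤ G i (j+1) - G i j) := by
    intro n
    induction n with
    | zero =>
      intro i j hij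
      obtain ⟨rfl, rfl⟩ := Nat.add_eq_zero.mp hij
      exact ⟨baseI 0, baseJ 0⟩
    | succ n ih =>
      intro i j hij
      constructor
      · cases j with
        | zero => exact baseI i
        | succ j' =>
          obtain ⟨hI, hJ⟩ := ih i j' (by omega)
          have e1 : G (i+1) (j'+1) = max (G i (j'+1)) (G (i+1) j') + ω (i+1) (j'+1) := by
            rw [hG]; simp
          have e2 : G' (i+1) (j'+1) = max (G' i (j'+1)) (G' (i+1) j') + ω' (i+1) (j'+1) := by
            rw [hG']; simp
          have ec : ω (i+1) (j'+1) = ω' (i+1) (j'+1) := hint _ _ (by omega) (by omega)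
          have hBA : G (i+1) j' - G i (j'+1) ≤ G' (i+1) j' - G' i (j'+1) := by linarith
          have h1 : max (G i (j'+1)) (G (i+1) j') - G i (j'+1)
              ≤ max (G' i (j'+1)) (G' (i+1) j') - G' i (j'+1) := by
            rw [show max (G i (j'+1)) (G (i+1) j') - G i (j'+1)
                  = max 0 (G (i+1) j' - G i (j'+1)) by
                rw [← max_sub_sub_right, sub_self],
              show max (G' i (j'+1)) (G' (i+1) j') - G' i (j'+1)
                  = max 0 (G' (i+1) j' - G' i (j'+1)) by
                rw [← max_sub_sub_right, sub_self]]
            exact max_le_max le_rfl hBA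
          rw [e1, e2, ec]
          linarith
      · cases i with
        | zero => exact baseJ j
        | succ i' =>
          obtain ⟨hI, hJ⟩ := ih i' j (by omega)
          have e1 : G (i'+1) (j+1) = max (G i' (j+1)) (G (i'+1) j) + ω (i'+1) (j+1) := by
            rw [hG]; simp
          have e2 : G' (i'+1) (j+1) = max (G' i' (j+1)) (G' (i'+1) j) + ω' (i'+1) (j+1) := by
            rw [hG']; simp
          have ec : ω (i'+1) (j+1) = ω' (i'+1) (j+1) := hint _ _ (by omega) (by omega)
          have hBA : G' i' (j+1) - G' (i'+1) j ≤ G i' (j+1) - G (i'+1) j := by linarith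
          have h1 : max (G' i' (j+1)) (G' (i'+1) j) - G' (i'+1) j
              ≤ max (G i' (j+1)) (G (i'+1) j) - G (i'+1) j := by
            rw [show max (G' i' (j+1)) (G' (i'+1) j) - G' (i'+1) j
                  = max (G' i' (j+1) - G' (i'+1) j) 0 by
                rw [← max_sub_sub_right, sub_self],
              show max (G i' (j+1)) (G (i'+1) j) - G (i'+1) j
                  = max (G i' (j+1) - G (i'+1) j) 0 by
                rw [← max_sub_sub_right, sub_self]]
            exact max_le_max hBA le_rfl
          rw [e1, e2, ec]
          linarith
  exact ⟨fun i j => (key (i+j) i j rfl).1, fun i j => (key (i+j) i j rfl).2⟩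
end

section
/- Let N and S be integrable random variables on a probability space such that S ~ Gamma(m, 1-ρ) and E(N·S), E(N) are finite. Suppose for each small ε ≥ 0 we have a random variable S^ε ~ Gamma(m, 1-ρ-ε) with the property that h(s) := E(N | S = s) satisfies E(N^ε) = ∫₀^∞ h(s) f_ε(s) ds where f_ε is the Gamma(m, 1-ρ-ε) density, and h is bounded by a polynomial. Then d/dε E(N^ε) at ε = 0 equals E(N·S) - (m/(1-ρ))·E(N) = Cov(N, S). -/
open MeasureTheory

/-- The Gamma(m, 1-ρ-ε) density. -/
noncomputable def gammaDens (m : ℕ) (ρ ε s : ℝ) : ℝ :=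
  (1 - ρ - ε) ^ m * Real.exp (-(1 - ρ - ε) * s) * s ^ (m - 1) /
    (Nat.factorial (m - 1))

/-! With the rate `c = 1 - ρ - ε`, the density satisfies `∂_ε f_ε(s) = (s - m / c) f_ε(s)`.
For `ε` within `c₀ / 2` of `ε₀` this derivative, multiplied by the polynomially bounded `h`,
is dominated by a polynomial times `exp (-(c₀ / 2) s)`, so one may differentiate under the
integral sign. At `ε = 0` the two resulting integrals are `E(NS)` and `E(N)` by hypothesis. -/

open Set Filter Topology Polynomial

lemma integrableOn_Ioi_pow_mul_exp_neg_mul (n : ℕ) {b : ℝ} (hb : 0 < b) :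
    IntegrableOn (fun s : ℝ => s ^ n * Real.exp (-(b * s))) (Ioi 0) := by
  refine (integrableOn_rpow_mul_exp_neg_mul_rpow (p := 1) (s := n)
    (by linarith [(n.cast_nonneg : (0 : ℝ) ≤ n)]) one_pos hb).congr_fun
    (fun s _ => ?_) measurableSet_Ioi
  simp only [Real.rpow_natCast, Real.rpow_one, neg_mul]

lemma integrableOn_Ioi_eval_mul_exp_neg_mul (P : ℝ[X]) {b : ℝ} (hb : 0 < b) :
    IntegrableOn (fun s : ℝ => P.eval s * Real.exp (-(b * s))) (Ioi 0) := by
  simp_rw [eval_eq_sum_range, Finset.sum_mul, mul_assoc]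
  exact integrable_finsetSum _ fun i _ =>
    (integrableOn_Ioi_pow_mul_exp_neg_mul i hb).const_mul _

lemma hasDerivAt_gammaDens (m : ℕ) (ρ s : ℝ) {ε : ℝ} (hε : 1 - ρ - ε ≠ 0) :
    HasDerivAt (fun ε => gammaDens m ρ ε s)
      ((s - m / (1 - ρ - ε)) * gammaDens m ρ ε s) ε := by
  have hrate : HasDerivAt (fun ε : ℝ => 1 - ρ - ε) (-1) ε := by
    simpa using (hasDerivAt_id ε).const_sub (1 - ρ)
  have hexp : HasDerivAt (fun ε : ℝ => Real.exp (-(1 - ρ - ε) * s))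
      (Real.exp (-(1 - ρ - ε) * s) * s) ε := by
    simpa using (hrate.neg.mul_const s).exp
  have hdens : (fun ε => gammaDens m ρ ε s) = fun ε =>
      (1 - ρ - ε) ^ m * Real.exp (-(1 - ρ - ε) * s) * (s ^ (m - 1) / (m - 1).factorial) := by
    ext ε
    rw [gammaDens, mul_div_assoc]
  rw [hdens]
  refine (((hrate.fun_pow m).fun_mul hexp).mul_const _).congr_deriv ?_
  simp only [gammaDens]
  rcases m with _ | m
  · simp [mul_comm]
  · field_simp
    push_cast
    ring

lemma abs_gammaDens_le {m : ℕ} {ρ ε b B s : ℝ} (hb : 0 ≤ b) (hbε : b ≤ 1 - ρ - ε)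
    (hBε : 1 - ρ - ε ≤ B) (hs : 0 ≤ s) :
    |gammaDens m ρ ε s| ≤ B ^ m * s ^ (m - 1) * Real.exp (-(b * s)) := by
  have hc : 0 ≤ 1 - ρ - ε := hb.trans hbε
  have hB : 0 ≤ B := hc.trans hBε
  have hfact : (1 : ℝ) ≤ (m - 1).factorial := by exact_mod_cast (m - 1).factorial_pos
  rw [gammaDens, abs_of_nonneg (by positivity)]
  calc (1 - ρ - ε) ^ m * Real.exp (-(1 - ρ - ε) * s) * s ^ (m - 1) / (m - 1).factorial
      ≤ (1 - ρ - ε) ^ m * Real.exp (-(1 - ρ - ε) * s) * s ^ (m - 1) :=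
        div_le_self (by positivity) hfact
    _ ≤ B ^ m * Real.exp (-(b * s)) * s ^ (m - 1) := by
        gcongr
        nlinarith
    _ = B ^ m * s ^ (m - 1) * Real.exp (-(b * s)) := by ring

lemma integrableOn_mul_gammaDens {m : ℕ} {ρ ε : ℝ} (hc : 0 < 1 - ρ - ε) {h : ℝ → ℝ}
    (hmeas : Measurable h) {P : ℝ[X]} (hP : ∀ s, 0 < s → |h s| ≤ P.eval s) :
    IntegrableOn (fun s => h s * gammaDens m ρ ε s) (Ioi 0) := by
  refine (integrableOn_Ioi_eval_mul_exp_neg_mul (P * C ((1 - ρ - ε) ^ m) * X ^ (m - 1)) hc).mono'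
    (hmeas.mul (by unfold gammaDens; fun_prop)).aestronglyMeasurable ?_
  refine (ae_restrict_iff' measurableSet_Ioi).2 (Eventually.of_forall fun s (hs : 0 < s) => ?_)
  rw [Real.norm_eq_abs, abs_mul]
  calc |h s| * |gammaDens m ρ ε s|
      ≤ P.eval s * ((1 - ρ - ε) ^ m * s ^ (m - 1) * Real.exp (-((1 - ρ - ε) * s))) :=
        mul_le_mul (hP s hs) (abs_gammaDens_le hc.le le_rfl le_rfl hs.le) (abs_nonneg _)
          ((abs_nonneg _).trans (hP s hs))
    _ = _ := by simp only [eval_mul, eval_C, eval_pow, eval_X]; ring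

theorem hasDerivAt_setIntegral_mul_gammaDens {m : ℕ} {ρ ε₀ : ℝ} (hc : 0 < 1 - ρ - ε₀)
    {h : ℝ → ℝ} (hmeas : Measurable h) {P : ℝ[X]} (hP : ∀ s, 0 < s → |h s| ≤ P.eval s) :
    HasDerivAt (fun ε => ∫ s in Ioi 0, h s * gammaDens m ρ ε s)
      ((∫ s in Ioi 0, h s * s * gammaDens m ρ ε₀ s) -
        m / (1 - ρ - ε₀) * ∫ s in Ioi 0, h s * gammaDens m ρ ε₀ s) ε₀ := by
  set c₀ := 1 - ρ - ε₀
  have hb : 0 < c₀ / 2 := by positivity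
  have hrate : ∀ ε ∈ Metric.ball ε₀ (c₀ / 2), c₀ / 2 ≤ 1 - ρ - ε ∧ 1 - ρ - ε ≤ 2 * c₀ := by
    intro ε hε
    rw [Metric.mem_ball, Real.dist_eq, abs_lt] at hε
    constructor <;> linarith
  have hderiv_le : ∀ ε ∈ Metric.ball ε₀ (c₀ / 2), ∀ s, 0 < s →
      ‖h s * ((s - m / (1 - ρ - ε)) * gammaDens m ρ ε s)‖ ≤
        (P * (X + C (m / (c₀ / 2))) * C ((2 * c₀) ^ m) * X ^ (m - 1)).eval s *
          Real.exp (-(c₀ / 2 * s)) := by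
    intro ε hε s hs
    obtain ⟨hlo, hhi⟩ := hrate ε hε
    have hfactor : |s - m / (1 - ρ - ε)| ≤ s + m / (c₀ / 2) := by
      have : m / (1 - ρ - ε) ≤ m / (c₀ / 2) := div_le_div_of_nonneg_left (by positivity) hb hlo
      rw [abs_le]
      constructor <;> nlinarith [div_nonneg m.cast_nonneg (hb.le.trans hlo)]
    rw [Real.norm_eq_abs, abs_mul, abs_mul]
    calc |h s| * (|s - m / (1 - ρ - ε)| * |gammaDens m ρ ε s|)
        ≤ P.eval s * ((s + m / (c₀ / 2)) *
            ((2 * c₀) ^ m * s ^ (m - 1) * Real.exp (-(c₀ / 2 * s)))) := by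
          gcongr
          · exact (abs_nonneg _).trans (hP s hs)
          · exact hP s hs
          · exact abs_gammaDens_le hb.le hlo hhi hs.le
      _ = _ := by simp only [eval_mul, eval_add, eval_C, eval_pow, eval_X]; ring
  have hdom := hasDerivAt_integral_of_dominated_loc_of_deriv_le
    (μ := volume.restrict (Ioi 0)) (Metric.ball_mem_nhds ε₀ hb)
    (Eventually.of_forall fun ε => (hmeas.mul (by unfold gammaDens; fun_prop)).aestronglyMeasurable)
    (integrableOn_mul_gammaDens hc hmeas hP)
    (hmeas.mul (by unfold gammaDens; fun_prop)).aestronglyMeasurable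
    ((ae_restrict_iff' measurableSet_Ioi).2 (Eventually.of_forall fun s hs ε hε =>
      hderiv_le ε hε s hs))
    (integrableOn_Ioi_eval_mul_exp_neg_mul _ hb)
    (Eventually.of_forall fun s ε hε =>
      (hasDerivAt_gammaDens m ρ s (hb.trans_le (hrate ε hε).1).ne').const_mul (h s))
  have hint_mul_id : IntegrableOn (fun s => h s * s * gammaDens m ρ ε₀ s) (Ioi 0) :=
    integrableOn_mul_gammaDens hc (hmeas.mul measurable_id) (P := P * X) fun s hs => by
      rw [abs_mul, abs_of_pos hs, eval_mul, eval_X]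
      exact mul_le_mul_of_nonneg_right (hP s hs) hs.le
  refine hdom.2.congr_deriv ?_
  rw [← integral_const_mul, ← integral_sub hint_mul_id
    ((integrableOn_mul_gammaDens hc hmeas hP).const_mul _)]
  congr 1 with s
  ring

theorem stmt_14_general {Ω : Type*} [MeasureSpace Ω] {μ : Measure Ω}
    (m : ℕ) (ρ : ℝ) (hρ0 : 0 < ρ) (hρ1 : ρ < 1)
    (h : ℝ → ℝ) (hmeas : Measurable h)
    (hpoly : ∃ C : ℝ, ∃ k : ℕ, ∀ s : ℝ, 0 ≤ s → |h s| ≤ C * (1 + s ^ k))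
    (g : ℝ → ℝ)
    (hg : ∀ ε : ℝ, -ρ < ε → ρ + ε < 1 →
      g ε = ∫ s in Set.Ioi (0 : ℝ), h s * gammaDens m ρ ε s)
    (N S : Ω → ℝ)
    (hcond1 : ∫ ω, N ω * S ω ∂μ = ∫ s in Set.Ioi (0 : ℝ), h s * s * gammaDens m ρ 0 s)
    (hcond2 : ∫ ω, N ω ∂μ = ∫ s in Set.Ioi (0 : ℝ), h s * gammaDens m ρ 0 s)
    (hES : ∫ ω, S ω ∂μ = m / (1 - ρ)) :
    HasDerivAt g ((∫ ω, N ω * S ω ∂μ) - (m / (1 - ρ)) * ∫ ω, N ω ∂μ) 0 ∧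
      (∫ ω, N ω * S ω ∂μ) - (m / (1 - ρ)) * (∫ ω, N ω ∂μ) =
        (∫ ω, N ω * S ω ∂μ) - (∫ ω, N ω ∂μ) * (∫ ω, S ω ∂μ) := by
  obtain ⟨A, k, hA⟩ := hpoly
  have hderiv := hasDerivAt_setIntegral_mul_gammaDens (m := m) (ε₀ := 0)
    (by linarith : 0 < 1 - ρ - 0) hmeas (P := C A * (1 + X ^ k))
    fun s hs => by simpa using hA s hs.le
  have hg_eq : g =ᶠ[𝓝 0] fun ε => ∫ s in Ioi 0, h s * gammaDens m ρ ε s := by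
    filter_upwards [Ioo_mem_nhds (neg_neg_of_pos hρ0) (sub_pos.2 hρ1)] with ε hε
    exact hg ε hε.1 (by linarith [hε.2])
  refine ⟨?_, by rw [hES]; ring⟩
  rw [hcond1, hcond2]
  simpa using hderiv.congr_of_eventuallyEq hg_eq

theorem stmt_14 {Ω : Type*} [MeasureSpace Ω] {μ : Measure Ω} [IsProbabilityMeasure μ]
    (m : ℕ) (hm : 1 ≤ m) (ρ : ℝ) (hρ0 : 0 < ρ) (hρ1 : ρ < 1)
    (h : ℝ → ℝ) (hmeas : Measurable h)
    (hpoly : ∃ C : ℝ, ∃ k : ℕ, ∀ s : ℝ, 0 ≤ s → |h s| ≤ C * (1 + s ^ k))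
    (g : ℝ → ℝ)
    (hg : ∀ ε : ℝ, -ρ < ε → ρ + ε < 1 →
      g ε = ∫ s in Set.Ioi (0 : ℝ), h s * gammaDens m ρ ε s)
    (N S : Ω → ℝ) (hNS : Integrable (fun ω => N ω * S ω) μ) (hNint : Integrable N μ)
    (hcond1 : ∫ ω, N ω * S ω ∂μ = ∫ s in Set.Ioi (0 : ℝ), h s * s * gammaDens m ρ 0 s)
    (hcond2 : ∫ ω, N ω ∂μ = ∫ s in Set.Ioi (0 : ℝ), h s * gammaDens m ρ 0 s)
    (hES : ∫ ω, S ω ∂μ = m / (1 - ρ)) :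
    HasDerivAt g ((∫ ω, N ω * S ω ∂μ) - (m / (1 - ρ)) * ∫ ω, N ω ∂μ) 0 ∧
      (∫ ω, N ω * S ω ∂μ) - (m / (1 - ρ)) * (∫ ω, N ω ∂μ) =
        (∫ ω, N ω * S ω ∂μ) - (∫ ω, N ω ∂μ) * (∫ ω, S ω ∂μ) :=
  stmt_14_general m ρ hρ0 hρ1 h hmeas hpoly g hg N S hcond1 hcond2 hES
end

section
/- Let 0 < ρ < 1, let s ≥ 1, u ≥ 2, t ≥ s, and set m = ⌊(1-ρ)²t⌋, n = ⌊ρ²t⌋, k = ⌊(1-ρ)²s⌋, l = ⌊ρ²s⌋, and assume k + u ≤ m. Then (√(k+u+1) + √l)² + (√(m-k-u) + √(n-l))² ≤ t + C₂(ρ) - C₁(ρ)·u²/t for constants C₁(ρ) > 0 and C₂(ρ) < ∞ depending only on ρ. -/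
/-!
For weights `α + β = 1` one has `(√x + √y)² = x / α + y / β - (β √x - α √y)² / (α β)`, the
variational formula behind `E G = (√a + √b)²`. With `α = 1 - ρ`, `β = ρ` both terms of the sum are
bounded by their linear parts, which add up to at most `t + 1 / (1 - ρ)` because `(m, n)` lies below
`t ((1 - ρ)², ρ²)`. For the first term, displaced by `u` from the characteristic, the error term
`(β √x - α √y)² = (β² x - α² y)² / (β √x + α √y)²` has numerator at least `(ρ² u)²` and
denominator at most `β x + α y ≤ 2 t`, which gives the deficit of order `u² / t`.
-/

open Real

section WeightedSqrt

variable {α β x y : ℝ}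

theorem sq_sqrt_add_sqrt_add_sq_sub_div_eq (hα : 0 < α) (hβ : 0 < β) (hαβ : α + β = 1)
    (hx : 0 ≤ x) (hy : 0 ≤ y) :
    (√x + √y) ^ 2 + (β * √x - α * √y) ^ 2 / (α * β) = x / α + y / β := by
  have hsx := sq_sqrt hx
  have hsy := sq_sqrt hy
  field_simp
  linear_combination (x * β + y * α) * hαβ + β * (α + β) * hsx + α * (α + β) * hsy

theorem sq_sqrt_add_sqrt_le (hα : 0 < α) (hβ : 0 < β) (hαβ : α + β = 1)
    (hx : 0 ≤ x) (hy : 0 ≤ y) :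
    (√x + √y) ^ 2 ≤ x / α + y / β := by
  rw [← sq_sqrt_add_sqrt_add_sq_sub_div_eq hα hβ hαβ hx hy]
  have : 0 ≤ (β * √x - α * √y) ^ 2 / (α * β) := by positivity
  linarith

theorem sq_mul_sqrt_add_mul_sqrt_le (hα : 0 ≤ α) (hβ : 0 ≤ β) (hαβ : α + β = 1)
    (hx : 0 ≤ x) (hy : 0 ≤ y) :
    (β * √x + α * √y) ^ 2 ≤ β * x + α * y := by
  have hgap : β * x + α * y - (β * √x + α * √y) ^ 2 = α * β * (√x - √y) ^ 2 := by
    linear_combination -(β * √x ^ 2 + α * √y ^ 2) * hαβ - β * sq_sqrt hx - α * sq_sqrt hy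
  linarith [mul_nonneg (mul_nonneg hα hβ) (sq_nonneg (√x - √y))]

theorem sq_sub_div_le_sq_mul_sqrt_sub (hα : 0 ≤ α) (hβ : 0 ≤ β) (hαβ : α + β = 1)
    (hx : 0 ≤ x) (hy : 0 ≤ y) :
    (β ^ 2 * x - α ^ 2 * y) ^ 2 / (β * x + α * y) ≤ (β * √x - α * √y) ^ 2 := by
  have hfactor : β ^ 2 * x - α ^ 2 * y = (β * √x - α * √y) * (β * √x + α * √y) := by
    linear_combination -β ^ 2 * sq_sqrt hx + α ^ 2 * sq_sqrt hy
  rw [hfactor, mul_pow]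
  apply div_le_of_le_mul₀ (by positivity) (sq_nonneg _)
  exact mul_le_mul_of_nonneg_left (sq_mul_sqrt_add_mul_sqrt_le hα hβ hαβ hx hy) (sq_nonneg _)

theorem sq_sqrt_add_sqrt_add_sq_sub_div_le (hα : 0 < α) (hβ : 0 < β) (hαβ : α + β = 1)
    (hx : 0 ≤ x) (hy : 0 ≤ y) :
    (√x + √y) ^ 2 + (β ^ 2 * x - α ^ 2 * y) ^ 2 / (α * β * (β * x + α * y)) ≤
      x / α + y / β := by
  rw [← sq_sqrt_add_sqrt_add_sq_sub_div_eq hα hβ hαβ hx hy, mul_comm (α * β), ← div_div]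
  gcongr
  exact sq_sub_div_le_sq_mul_sqrt_sub hα.le hβ.le hαβ hx hy

end WeightedSqrt

theorem sq_sqrt_add_sqrt_add_sq_sqrt_add_sqrt_le {ρ s t a b m n u : ℝ} (hρ0 : 0 < ρ) (hρ1 : ρ < 1)
    (ha : 0 ≤ a) (hb : 0 ≤ b) (hu : 0 ≤ u) (ht : 1 ≤ t)
    (has : (1 - ρ) ^ 2 * s < a + 1) (hbs : b ≤ ρ ^ 2 * s)
    (hmt : m ≤ (1 - ρ) ^ 2 * t) (hnt : n ≤ ρ ^ 2 * t) (ham : a + u ≤ m) (hbn : b ≤ n) :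
    (√(a + u + 1) + √b) ^ 2 + (√(m - a - u) + √(n - b)) ^ 2 ≤
      t + 1 / (1 - ρ) - ρ ^ 3 / (2 * (1 - ρ)) * u ^ 2 / t := by
  have hα : 0 < 1 - ρ := sub_pos.2 hρ1
  have hαβ : (1 - ρ) + ρ = 1 := sub_add_cancel 1 ρ
  have hfirst := sq_sqrt_add_sqrt_add_sq_sub_div_le hα hρ0 hαβ (x := a + u + 1) (by positivity) hb
  have hsecond := sq_sqrt_add_sqrt_le hα hρ0 hαβ (x := m - a - u) (y := n - b)
    (by linarith) (by linarith)
  have hgap : ρ ^ 2 * u ≤ ρ ^ 2 * (a + u + 1) - (1 - ρ) ^ 2 * b := by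
    nlinarith [mul_le_mul_of_nonneg_left has.le (sq_nonneg ρ),
      mul_le_mul_of_nonneg_left hbs (sq_nonneg (1 - ρ))]
  have hmass : ρ * (a + u + 1) + (1 - ρ) * b ≤ 2 * t := by nlinarith
  have hdeficit : ρ ^ 3 / (2 * (1 - ρ)) * u ^ 2 / t ≤
      (ρ ^ 2 * (a + u + 1) - (1 - ρ) ^ 2 * b) ^ 2 /
        ((1 - ρ) * ρ * (ρ * (a + u + 1) + (1 - ρ) * b)) := by
    have hpos : 0 < ρ * (a + u + 1) + (1 - ρ) * b := by positivity
    calc _ = (ρ ^ 2 * u) ^ 2 / ((1 - ρ) * ρ * (2 * t)) := by field_simp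
      _ ≤ _ := by gcongr
  have hm : m / (1 - ρ) ≤ (1 - ρ) * t := by rw [div_le_iff₀ hα]; nlinarith
  have hn : n / ρ ≤ ρ * t := by rw [div_le_iff₀ hρ0]; nlinarith
  have htotal : (a + u + 1) / (1 - ρ) + b / ρ + ((m - a - u) / (1 - ρ) + (n - b) / ρ) =
      m / (1 - ρ) + n / ρ + 1 / (1 - ρ) := by
    field_simp; ring
  linarith

theorem stmt_18 (ρ : ℝ) (hρ0 : 0 < ρ) (hρ1 : ρ < 1) :
    ∃ C₁ > (0 : ℝ), ∃ C₂ : ℝ,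
      ∀ s u t : ℝ, 1 ≤ s → 2 ≤ u → s ≤ t →
        ((⌊(1 - ρ) ^ 2 * s⌋ : ℝ) + u ≤ (⌊(1 - ρ) ^ 2 * t⌋ : ℝ)) →
        (Real.sqrt ((⌊(1 - ρ) ^ 2 * s⌋ : ℝ) + u + 1) +
            Real.sqrt (⌊ρ ^ 2 * s⌋ : ℝ)) ^ 2 +
          (Real.sqrt ((⌊(1 - ρ) ^ 2 * t⌋ : ℝ) - (⌊(1 - ρ) ^ 2 * s⌋ : ℝ) - u) +
            Real.sqrt ((⌊ρ ^ 2 * t⌋ : ℝ) - (⌊ρ ^ 2 * s⌋ : ℝ))) ^ 2 ≤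
        t + C₂ - C₁ * u ^ 2 / t := by
  have hα : 0 < 1 - ρ := sub_pos.2 hρ1
  refine ⟨ρ ^ 3 / (2 * (1 - ρ)), by positivity, 1 / (1 - ρ), fun s u t hs hu hst hku => ?_⟩
  have hs0 : 0 ≤ s := by linarith
  exact sq_sqrt_add_sqrt_add_sq_sqrt_add_sqrt_le hρ0 hρ1
    (by exact_mod_cast Int.floor_nonneg.2 (by positivity))
    (by exact_mod_cast Int.floor_nonneg.2 (by positivity)) (by linarith) (by linarith)
    (Int.lt_floor_add_one _) (Int.floor_le _) (Int.floor_le _) (Int.floor_le _) hku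
    (by exact_mod_cast Int.floor_le_floor (by gcongr))
end

section
/- Let 0 < ρ < 1, t ≥ 1, u ≥ 2 with u ≤ (1-ρ)²t, and set m = ⌊(1-ρ)²t⌋, n = ⌊ρ²t⌋. Then (u+1)/(1-ρ) + (√(m-u) + √n)² ≤ t + C₂(ρ) - (ρ/(4(1-ρ)³))·(u-1)²/t for a constant C₂(ρ) depending only on ρ. -/
set_option maxHeartbeats 1000000


theorem stmt_19 (ρ : ℝ) (hρ0 : 0 < ρ) (hρ1 : ρ < 1) :
    ∃ C₂ : ℝ,
      ∀ t u : ℝ, 1 ≤ t → 2 ≤ u → u ≤ (1 - ρ) ^ 2 * t →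
        (u + 1) / (1 - ρ) +
          (Real.sqrt ((⌊(1 - ρ) ^ 2 * t⌋ : ℝ) - u) +
            Real.sqrt (⌊ρ ^ 2 * t⌋ : ℝ)) ^ 2 ≤
        t + C₂ - (ρ / (4 * (1 - ρ) ^ 3)) * (u - 1) ^ 2 / t := by
  refine ⟨1 / (1 - ρ), ?_⟩
  intro t u ht hu hua
  have h1ρ : 0 < 1 - ρ := by linarith
  have ht0 : 0 < t := by linarith
  have hu0 : 0 ≤ u := by linarith
  set a : ℝ := (1 - ρ) ^ 2 * t with ha
  set b : ℝ := ρ ^ 2 * t with hb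
  have hb0 : 0 ≤ b := by positivity
  have hau : 0 ≤ a - u := by linarith
  have hm : (⌊a⌋ : ℝ) - u ≤ a - u := by
    have := Int.floor_le a; linarith
  have hn : (⌊b⌋ : ℝ) ≤ b := Int.floor_le b
  have hs1 : Real.sqrt ((⌊a⌋ : ℝ) - u) ≤ Real.sqrt (a - u) := Real.sqrt_le_sqrt hm
  have hs2 : Real.sqrt ((⌊b⌋ : ℝ)) ≤ Real.sqrt b := Real.sqrt_le_sqrt hn
  have hsum : (Real.sqrt ((⌊a⌋ : ℝ) - u) + Real.sqrt (⌊b⌋ : ℝ)) ^ 2 ≤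
      (Real.sqrt (a - u) + Real.sqrt b) ^ 2 := by
    apply pow_le_pow_left₀ (by positivity) (by linarith)
  have hsq : (Real.sqrt (a - u) + Real.sqrt b) ^ 2
      = (a - u) + b + 2 * Real.sqrt ((a - u) * b) := by
    rw [add_sq, Real.sq_sqrt hau, Real.sq_sqrt hb0, Real.sqrt_mul hau]
    ring
  set R : ℝ := ρ * (8 * (1 - ρ) ^ 4 * t ^ 2 - 4 * (1 - ρ) ^ 2 * t * u - u ^ 2) /
      (8 * (1 - ρ) ^ 3 * t) with hR
  have hnum : 0 ≤ 8 * (1 - ρ) ^ 4 * t ^ 2 - 4 * (1 - ρ) ^ 2 * t * u - u ^ 2 := by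
    have h1 : 0 ≤ (a - u) * (a + u) := mul_nonneg hau (by linarith)
    have h2 : 0 ≤ (a - u) * a := mul_nonneg hau (by linarith)
    have h3 : 0 ≤ a ^ 2 := sq_nonneg a
    nlinarith [h1, h2, h3]
  have hR0 : 0 ≤ R := by
    apply div_nonneg (mul_nonneg hρ0.le hnum)
    positivity
  have hRsq : (a - u) * b ≤ R ^ 2 := by
    rw [hR, div_pow, le_div_iff₀ (by positivity), ha, hb]
    have key : 0 ≤ ρ ^ 2 * u ^ 3 * (8 * ((1 - ρ) ^ 2 * t) + u) := by positivity
    nlinarith [key]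
  have hsR : Real.sqrt ((a - u) * b) ≤ R := by
    calc Real.sqrt ((a - u) * b) ≤ Real.sqrt (R ^ 2) := Real.sqrt_le_sqrt hRsq
      _ = R := Real.sqrt_sq hR0
  have hid : (a - u) + b + 2 * R + (u + 1) / (1 - ρ)
      = t + 1 / (1 - ρ) - ρ * u ^ 2 / (4 * (1 - ρ) ^ 3 * t) := by
    rw [hR, ha, hb]
    field_simp
    ring
  have hc : 0 ≤ ρ / (4 * (1 - ρ) ^ 3) :=
    le_of_lt (div_pos hρ0 (by nlinarith [pow_pos h1ρ 3]))
  have hmon : ρ / (4 * (1 - ρ) ^ 3) * (u - 1) ^ 2 / t ≤ ρ * u ^ 2 / (4 * (1 - ρ) ^ 3 * t) := by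
    have heq : ρ * u ^ 2 / (4 * (1 - ρ) ^ 3 * t) = ρ / (4 * (1 - ρ) ^ 3) * u ^ 2 / t := by
      field_simp
    rw [heq]
    have h2 : (u - 1) ^ 2 ≤ u ^ 2 := by nlinarith
    have h3 : ρ / (4 * (1 - ρ) ^ 3) * (u - 1) ^ 2 ≤ ρ / (4 * (1 - ρ) ^ 3) * u ^ 2 :=
      mul_le_mul_of_nonneg_left h2 hc
    gcongr
  linarith [hsum, hsq, hsR, hid, hmon]
end
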